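/- arXiv:1006.5175 — 5 statements merged into one kernel-verified Lean document; each statement's English description precedes it below -/
import Mathlib

section
/- Let R be a strongly F-regular integral domain of characteristic p > 0. Then R is normal (integrally closed in its fraction field). -/
/-!
If `x = a / d` is integral over `R`, then some `c ≠ 0` clears the denominators of all of `R[x]`,
so `r := c x^q ∈ R` for `q = p^e`, i.e. `d^q r = c a^q`. Applying a `p^{-e}`-linear map `φ` with
`φ c = 1` gives `d φ(r) = a`, hence `x = φ(r) ∈ R`.
-/

open IsLocalization

theorem IsFractionRing.isInteger_of_isInteger_smul_pow {R K : Type*} [CommRing R] [Field K]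
    [Algebra R K] [IsFractionRing R K] {φ : R → R} {q : ℕ}
    (hφ : ∀ a y, φ (a ^ q * y) = a * φ y) {c : R} (hc : φ c = 1) {x : K}
    (hx : IsInteger R (c • x ^ q)) : IsInteger R x := by
  obtain ⟨r, hr⟩ := hx
  obtain ⟨a, d, hd, rfl⟩ := IsFractionRing.div_surjective (A := R) x
  have hd0 : algebraMap R K d ≠ 0 := (IsLocalization.map_units K ⟨d, hd⟩).ne_zero
  have hrel : d ^ q * r = c * a ^ q := IsFractionRing.injective R K <| by
    rw [map_mul, map_mul, map_pow, map_pow, hr, Algebra.smul_def, div_pow]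
    field_simp
  have ha : a = d * φ r := by
    rw [← hφ, hrel, mul_comm, hφ, hc, mul_one]
  refine ⟨φ r, ?_⟩
  rw [ha, map_mul, mul_div_cancel_left₀ _ hd0]

theorem stmt_11_general (p : ℕ) (R : Type*) [CommRing R] [IsDomain R]
    (hSFR : ∀ r : R, r ≠ 0 → ∃ (e : ℕ) (φ : R → R),
      (∀ x y, φ (x + y) = φ x + φ y) ∧ (∀ a x, φ (a ^ p ^ e * x) = a * φ x) ∧ φ r = 1) :
    IsIntegrallyClosed R := by
  rw [isIntegrallyClosed_iff (FractionRing R)]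
  intro x hx
  obtain ⟨c, hc, hcx⟩ := FractionalIdeal.isFractional_adjoin_integral (nonZeroDivisors R) x hx
  obtain ⟨e, φ, -, hφ, hφc⟩ := hSFR c (nonZeroDivisors.ne_zero hc)
  exact IsFractionRing.isInteger_of_isInteger_smul_pow hφ hφc
    (hcx _ (Subalgebra.pow_mem _ (Algebra.self_mem_adjoin_singleton R x) _))

/-- A strongly F-regular integral domain of characteristic `p > 0` is normal
(integrally closed in its fraction field). -/
theorem stmt_11 (p : ℕ) [Fact p.Prime] (R : Type*) [CommRing R] [IsDomain R] [CharP R p]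
    (hSFR : ∀ r : R, r ≠ 0 → ∃ (e : ℕ) (φ : R → R),
      (∀ x y, φ (x + y) = φ x + φ y) ∧ (∀ a x, φ (a ^ p ^ e * x) = a * φ x) ∧ φ r = 1) :
    IsIntegrallyClosed R :=
  stmt_11_general p R hSFR
end

section
/- Let f: X → Y be a morphism of schemes over a field of characteristic p > 0 such that the natural map O_Y → f_* O_X is an isomorphism. If X admits a Frobenius splitting, then Y admits a Frobenius splitting obtained by pushing forward. -/
open AlgebraicGeometry CategoryTheory Opposite

/-! When every `f.app U` is bijective, conjugating the splitting of `X` on `f ⁻¹ᵁ U` by the ring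
isomorphism `f.app U : Γ(Y, U) ≃+* Γ(X, f ⁻¹ᵁ U)` gives a splitting of `Y` on `U`; these glue
because `f.app` is natural in `U`. -/

/-- A splitting `F_* R → R` of Frobenius, seen as a map on `R`: linearity over `F_* R` reads
`s (a ^ p * x) = a * s x`. -/
structure IsFrobeniusSplitting (p : ℕ) {R : Type*} [Semiring R] (s : R → R) : Prop where
  map_add : ∀ x y, s (x + y) = s x + s y
  map_pow_mul : ∀ a x, s (a ^ p * x) = a * s x
  map_pow : ∀ g, s (g ^ p) = g

lemma IsFrobeniusSplitting.conj_ringEquiv {p : ℕ} {R S : Type*} [Semiring R] [Semiring S]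
    {s : S → S} (hs : IsFrobeniusSplitting p s) (e : R ≃+* S) :
    IsFrobeniusSplitting p (e.symm ∘ s ∘ e) where
  map_add x y := by simp [hs.map_add]
  map_pow_mul a x := by simp [hs.map_pow_mul]
  map_pow g := by simp [hs.map_pow]

namespace AlgebraicGeometry.Scheme.Hom

variable {X Y : Scheme} (f : X ⟶ Y) (happ : ∀ U : Y.Opens, Function.Bijective (f.app U))

noncomputable def appRingEquiv (U : Y.Opens) : Γ(Y, U) ≃+* Γ(X, f ⁻¹ᵁ U) :=
  RingEquiv.ofBijective (f.app U).hom (happ U)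

lemma appRingEquiv_apply (U : Y.Opens) (x : Γ(Y, U)) : f.appRingEquiv happ U x = f.app U x :=
  rfl

lemma app_appRingEquiv_symm (U : Y.Opens) (z : Γ(X, f ⁻¹ᵁ U)) :
    f.app U ((f.appRingEquiv happ U).symm z) = z :=
  (f.appRingEquiv happ U).apply_symm_apply z

noncomputable def pushforwardSplitting (s : ∀ U : X.Opens, Γ(X, U) → Γ(X, U)) (U : Y.Opens) :
    Γ(Y, U) → Γ(Y, U) :=
  (f.appRingEquiv happ U).symm ∘ s (f ⁻¹ᵁ U) ∘ f.appRingEquiv happ U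

lemma app_map_homOfLE {U V : Y.Opens} (h : V ≤ U) (z : Γ(Y, U)) :
    f.app V (Y.presheaf.map (homOfLE h).op z) =
      X.presheaf.map (homOfLE (f.preimage_mono h)).op (f.app U z) :=
  congr($(f.naturality (homOfLE h).op) z)

lemma map_pushforwardSplitting {s : ∀ U : X.Opens, Γ(X, U) → Γ(X, U)}
    (hres : ∀ (U V : X.Opens) (h : V ≤ U) (x : Γ(X, U)),
      X.presheaf.map (homOfLE h).op (s U x) = s V (X.presheaf.map (homOfLE h).op x))
    {U V : Y.Opens} (h : V ≤ U) (x : Γ(Y, U)) :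
    Y.presheaf.map (homOfLE h).op (f.pushforwardSplitting happ s U x) =
      f.pushforwardSplitting happ s V (Y.presheaf.map (homOfLE h).op x) := by
  apply (happ V).injective
  simp only [pushforwardSplitting, Function.comp_apply, app_map_homOfLE, app_appRingEquiv_symm,
    appRingEquiv_apply, hres]

end AlgebraicGeometry.Scheme.Hom

theorem stmt_13_general (p : ℕ)
    (X Y : Scheme) (f : X ⟶ Y)
    -- `O_Y → f_* O_X` is an isomorphism
    (happ : ∀ U : Y.Opens, Function.Bijective (f.app U))
    -- a Frobenius splitting of `X`
    (sX : ∀ U : X.Opens, X.presheaf.obj (op U) → X.presheaf.obj (op U))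
    (hadd : ∀ (U : X.Opens) (x y : X.presheaf.obj (op U)), sX U (x + y) = sX U x + sX U y)
    (hres : ∀ (U V : X.Opens) (h : V ≤ U) (x : X.presheaf.obj (op U)),
      X.presheaf.map (homOfLE h).op (sX U x) = sX V (X.presheaf.map (homOfLE h).op x))
    (hlin : ∀ (U : X.Opens) (a x : X.presheaf.obj (op U)), sX U (a ^ p * x) = a * sX U x)
    (hsplit : ∀ (U : X.Opens) (g : X.presheaf.obj (op U)), sX U (g ^ p) = g) :
    -- then `Y` admits a Frobenius splitting
    ∃ sY : ∀ U : Y.Opens, Y.presheaf.obj (op U) → Y.presheaf.obj (op U),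
      (∀ (U : Y.Opens) (x y : Y.presheaf.obj (op U)), sY U (x + y) = sY U x + sY U y) ∧
      (∀ (U V : Y.Opens) (h : V ≤ U) (x : Y.presheaf.obj (op U)),
        Y.presheaf.map (homOfLE h).op (sY U x) = sY V (Y.presheaf.map (homOfLE h).op x)) ∧
      (∀ (U : Y.Opens) (a x : Y.presheaf.obj (op U)), sY U (a ^ p * x) = a * sY U x) ∧
      (∀ (U : Y.Opens) (g : Y.presheaf.obj (op U)), sY U (g ^ p) = g) := by
  have hX : ∀ U, IsFrobeniusSplitting p (sX U) := fun U => ⟨hadd U, hlin U, hsplit U⟩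
  have hY : ∀ U, IsFrobeniusSplitting p (f.pushforwardSplitting happ sX U) :=
    fun U => (hX (f ⁻¹ᵁ U)).conj_ringEquiv (f.appRingEquiv happ U)
  exact ⟨f.pushforwardSplitting happ sX, fun U => (hY U).map_add,
    fun _ _ h => f.map_pushforwardSplitting happ hres h, fun U => (hY U).map_pow_mul,
    fun U => (hY U).map_pow⟩

/-- Let `f : X → Y` be a morphism of schemes over a field of characteristic
`p > 0` with `O_Y → f_* O_X` an isomorphism.  If `X` admits a Frobenius
splitting then so does `Y`, by pushing forward. -/
theorem stmt_13 (p : ℕ) [Fact p.Prime] (k : Type) [Field k] [CharP k p]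
    (X Y : Scheme) (f : X ⟶ Y)
    (gX : X ⟶ Spec (CommRingCat.of k)) (gY : Y ⟶ Spec (CommRingCat.of k))
    (hcomm : gX = f ≫ gY)
    -- `O_Y → f_* O_X` is an isomorphism
    (happ : ∀ U : Y.Opens, Function.Bijective (f.app U))
    -- a Frobenius splitting of `X`
    (sX : ∀ U : X.Opens, X.presheaf.obj (op U) → X.presheaf.obj (op U))
    (hadd : ∀ (U : X.Opens) (x y : X.presheaf.obj (op U)), sX U (x + y) = sX U x + sX U y)
    (hres : ∀ (U V : X.Opens) (h : V ≤ U) (x : X.presheaf.obj (op U)),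
      X.presheaf.map (homOfLE h).op (sX U x) = sX V (X.presheaf.map (homOfLE h).op x))
    (hlin : ∀ (U : X.Opens) (a x : X.presheaf.obj (op U)), sX U (a ^ p * x) = a * sX U x)
    (hsplit : ∀ (U : X.Opens) (g : X.presheaf.obj (op U)), sX U (g ^ p) = g) :
    -- then `Y` admits a Frobenius splitting
    ∃ sY : ∀ U : Y.Opens, Y.presheaf.obj (op U) → Y.presheaf.obj (op U),
      (∀ (U : Y.Opens) (x y : Y.presheaf.obj (op U)), sY U (x + y) = sY U x + sY U y) ∧
      (∀ (U V : Y.Opens) (h : V ≤ U) (x : Y.presheaf.obj (op U)),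
        Y.presheaf.map (homOfLE h).op (sY U x) = sY V (Y.presheaf.map (homOfLE h).op x)) ∧
      (∀ (U : Y.Opens) (a x : Y.presheaf.obj (op U)), sY U (a ^ p * x) = a * sY U x) ∧
      (∀ (U : Y.Opens) (g : Y.presheaf.obj (op U)), sY U (g ^ p) = g) :=
  stmt_13_general p X Y f happ sX hadd hres hlin hsplit
end

section
/- Let Z ⊆ X be a closed subscheme compatibly Frobenius split in X, with ideal sheaf I_Z, and suppose the splitting s: F_* O_X → O_X satisfies s(I_Z) ⊆ I_Z. If Z₁ is an irreducible component of Z (with its reduced structure), then s(I_{Z₁}) ⊆ I_{Z₁}, i.e. Z₁ is also compatibly split. -/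
/-! A compatibly split ideal `I` is radical, since `y = s (y ^ p)`. Hence every `x` in a minimal
prime `P` over `I` satisfies `c * x ∈ I` for some `c ∉ P`, and then
`c * s x = s (c ^ p * x) ∈ I ⊆ P` forces `s x ∈ P`. -/

namespace Ideal

variable {R : Type*} [CommRing R] {I P : Ideal R}

/-- Otherwise `I` would be disjoint from the multiplicative set `{c * x ^ n | c ∉ P}`, and a prime
above `I` avoiding that set would lie inside `P` without containing `x`, contradicting minimality. -/
theorem exists_mul_pow_mem_of_mem_minimalPrimes (hP : P ∈ I.minimalPrimes) {x : R} (hx : x ∈ P) :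
    ∃ c ∉ P, ∃ n : ℕ, c * x ^ n ∈ I := by
  by_contra! h
  have hPprime : P.IsPrime := hP.1.1
  have hone : (1 : R) ∉ P := P.ne_top_iff_one.mp hPprime.ne_top
  let S : Submonoid R :=
    { carrier := {y | ∃ c ∉ P, ∃ n : ℕ, y = c * x ^ n}
      one_mem' := ⟨1, hone, 0, by ring⟩
      mul_mem' := by
        rintro _ _ ⟨c, hc, n, rfl⟩ ⟨d, hd, m, rfl⟩
        exact ⟨c * d, fun hcd => (hPprime.mem_or_mem hcd).elim hc hd, n + m, by ring⟩ }
  have hdisj : Disjoint (I : Set R) S := by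
    rw [Set.disjoint_left]
    rintro _ hyI ⟨c, hc, n, rfl⟩
    exact h c hc n hyI
  obtain ⟨Q, hQ, hIQ, hQS⟩ := exists_le_prime_disjoint I S hdisj
  have hQP : Q ≤ P := fun y hyQ => by
    by_contra hyP
    exact Set.disjoint_left.mp hQS hyQ ⟨y, hyP, 0, by ring⟩
  have hxQ : x ∈ Q := hP.2 ⟨hQ, hIQ⟩ hQP hx
  exact Set.disjoint_left.mp hQS hxQ ⟨1, hone, 1, by ring⟩

theorem IsRadical.exists_mul_mem_of_mem_minimalPrimes (hI : I.IsRadical)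
    (hP : P ∈ I.minimalPrimes) {x : R} (hx : x ∈ P) : ∃ c ∉ P, c * x ∈ I := by
  obtain ⟨c, hc, n, hcx⟩ := exists_mul_pow_mem_of_mem_minimalPrimes hP hx
  refine ⟨c, hc, hI ⟨n + 1, ?_⟩⟩
  have hpow : (c * x) ^ (n + 1) = (c ^ n * x) * (c * x ^ n) := by ring
  rw [hpow]
  exact I.mul_mem_left _ hcx

theorem isRadical_of_compatible_splitting {p : ℕ} (hp : 1 < p) (s : R → R)
    (hsplit : ∀ r, s (r ^ p) = r) (hI : ∀ x ∈ I, s x ∈ I) : I.IsRadical :=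
  (isRadical_iff_pow_one_lt p hp).mpr fun y hy => hsplit y ▸ hI _ hy

end Ideal

theorem stmt_14_general (p : ℕ) [Fact p.Prime] (R : Type*) [CommRing R]
    (s : R → R)
    (hlin : ∀ r x, s (r ^ p * x) = r * s x)
    (hsplit : ∀ r, s (r ^ p) = r)
    (I : Ideal R) (hI : ∀ x ∈ I, s x ∈ I)
    (P : Ideal R) (hP : P ∈ I.minimalPrimes) :
    ∀ x ∈ P, s x ∈ P := by
  intro x hx
  have hp : 1 < p := (Fact.out : p.Prime).one_lt
  obtain ⟨c, hc, hcx⟩ := (Ideal.isRadical_of_compatible_splitting hp s hsplit hI)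
    |>.exists_mul_mem_of_mem_minimalPrimes hP hx
  have hcpx : c ^ p * x ∈ I := by
    rw [← Nat.sub_add_cancel hp.le, pow_succ, mul_assoc]
    exact I.mul_mem_left _ hcx
  have hcsx : c * s x ∈ P := hP.1.2 (hlin c x ▸ hI _ hcpx)
  exact (hP.1.1.mem_or_mem hcsx).resolve_left hc

/-- Affine version of Lemma 3.2(1): if an ideal `I` of a Frobenius split ring
`(R, s)` is compatibly split, then every minimal prime over `I` (corresponding
to an irreducible component of `V(I)`) is compatibly split. -/
theorem stmt_14 (p : ℕ) [Fact p.Prime] (R : Type*) [CommRing R] [CharP R p]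
    (s : R → R)
    (hadd : ∀ x y, s (x + y) = s x + s y)
    (hlin : ∀ r x, s (r ^ p * x) = r * s x)
    (hsplit : ∀ r, s (r ^ p) = r)
    (I : Ideal R) (hI : ∀ x ∈ I, s x ∈ I)
    (P : Ideal R) (hP : P ∈ I.minimalPrimes) :
    ∀ x ∈ P, s x ∈ P :=
  stmt_14_general p R s hlin hsplit I hI P hP
end

section
/- Let G be a connected semisimple group over an algebraically closed field, H a closed subgroup, and suppose the restriction maps ∇(ω_i) → ∇^H(ω_i|_{T_H}) on dual Weyl modules are surjective for every fundamental weight ω_i, and that all multiplication (Cartan) maps ∇(μ) ⊗ ∇(ν) → ∇(μ+ν) and ∇^H(μ') ⊗ ∇^H(ν') → ∇^H(μ'+ν') between dual Weyl modules of dominant weights are surjective. Then for every dominant weight λ = Σ m_i ω_i, the restriction map ∇(λ) → ∇^H(λ|_{T_H}) is surjective. -/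
/-!
The weights at which restriction is surjective form an additive submonoid: products of
preimages restrict to products, and products span `∇^H(μ + ν)`. The fundamental weights
generate all dominant weights as a monoid.
-/

theorem Finsupp.mem_of_single_one_mem {I : Type*} (S : AddSubmonoid (I →₀ ℕ))
    (h : ∀ i, Finsupp.single i 1 ∈ S) (f : I →₀ ℕ) : f ∈ S := by
  induction f using Finsupp.induction with
  | zero => exact S.zero_mem
  | single_add i n f _ _ ih =>
    have hsingle : Finsupp.single i n ∈ S := by
      simpa only [Finsupp.smul_single, smul_eq_mul, mul_one] using S.nsmul_mem (h i) n
    exact S.add_mem hsingle ih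

theorem LinearMap.surjective_of_comp_bilinear {R : Type*} [CommSemiring R]
    {A B C A' B' C' : Type*} [AddCommMonoid A] [AddCommMonoid B] [AddCommMonoid C]
    [AddCommMonoid A'] [AddCommMonoid B'] [AddCommMonoid C']
    [Module R A] [Module R B] [Module R C] [Module R A'] [Module R B'] [Module R C']
    (m : A →ₗ[R] B →ₗ[R] C) (m' : A' →ₗ[R] B' →ₗ[R] C')
    (f : A →ₗ[R] A') (g : B →ₗ[R] B') (h : C →ₗ[R] C')
    (hm' : Submodule.span R {z | ∃ a b, m' a b = z} = ⊤)
    (hcomp : ∀ a b, h (m a b) = m' (f a) (g b))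
    (hf : Function.Surjective f) (hg : Function.Surjective g) :
    Function.Surjective h := by
  rw [← LinearMap.range_eq_top, ← top_le_iff, ← hm', Submodule.span_le]
  rintro z ⟨a', b', rfl⟩
  obtain ⟨a, rfl⟩ := hf a'
  obtain ⟨b, rfl⟩ := hg b'
  exact ⟨m a b, hcomp a b⟩

theorem stmt_16_general {k : Type*} [Field k] {I : Type*}
    (M N : (I →₀ ℕ) → Type*)
    [∀ lam, AddCommGroup (M lam)] [∀ lam, Module k (M lam)]
    [∀ lam, AddCommGroup (N lam)] [∀ lam, Module k (N lam)]
    (res : ∀ lam, M lam →ₗ[k] N lam)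
    (mulM : ∀ mu nu, M mu →ₗ[k] M nu →ₗ[k] M (mu + nu))
    (mulN : ∀ mu nu, N mu →ₗ[k] N nu →ₗ[k] N (mu + nu))
    -- surjectivity of the multiplication maps on tensor products (Ramanan–Ramanathan)
    (hNsurj : ∀ mu nu, Submodule.span k {z : N (mu + nu) | ∃ a b, mulN mu nu a b = z} = ⊤)
    -- restriction is compatible with multiplication
    (hcompat : ∀ mu nu a b, res (mu + nu) (mulM mu nu a b) = mulN mu nu (res mu a) (res nu b))
    (hzero : Function.Surjective (res 0))
    -- surjectivity for the fundamental weights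
    (hfund : ∀ i : I, Function.Surjective (res (Finsupp.single i 1))) :
    ∀ lam, Function.Surjective (res lam) := by
  let surjectiveWeights : AddSubmonoid (I →₀ ℕ) :=
    { carrier := {lam | Function.Surjective (res lam)}
      zero_mem' := hzero
      add_mem' := fun {mu nu} hmu hnu =>
        LinearMap.surjective_of_comp_bilinear (mulM mu nu) (mulN mu nu) (res mu) (res nu)
          (res (mu + nu)) (hNsurj mu nu) (hcompat mu nu) hmu hnu }
  exact Finsupp.mem_of_single_one_mem surjectiveWeights hfund

/-- Lemma 5.1 (abstract form): dominant weights are `λ = ∑ m_i ω_i`, encoded as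
finitely supported functions `I →₀ ℕ`; `M λ` plays the role of `∇(λ)` and `N λ`
of `∇^H(λ|_{T_H})`, with restriction maps `res λ` and surjective multiplication
(Cartan) maps compatible with restriction.  If the restriction maps are
surjective for all fundamental weights `ω_i = single i 1` (and for `0`), then
they are surjective for every dominant weight. -/
theorem stmt_16 {k : Type*} [Field k] {I : Type*} [Fintype I] [DecidableEq I]
    (M N : (I →₀ ℕ) → Type*)
    [∀ lam, AddCommGroup (M lam)] [∀ lam, Module k (M lam)]
    [∀ lam, AddCommGroup (N lam)] [∀ lam, Module k (N lam)]
    (res : ∀ lam, M lam →ₗ[k] N lam)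
    (mulM : ∀ mu nu, M mu →ₗ[k] M nu →ₗ[k] M (mu + nu))
    (mulN : ∀ mu nu, N mu →ₗ[k] N nu →ₗ[k] N (mu + nu))
    -- surjectivity of the multiplication maps on tensor products (Ramanan–Ramanathan)
    (hMsurj : ∀ mu nu, Submodule.span k {z : M (mu + nu) | ∃ a b, mulM mu nu a b = z} = ⊤)
    (hNsurj : ∀ mu nu, Submodule.span k {z : N (mu + nu) | ∃ a b, mulN mu nu a b = z} = ⊤)
    -- restriction is compatible with multiplication
    (hcompat : ∀ mu nu a b, res (mu + nu) (mulM mu nu a b) = mulN mu nu (res mu a) (res nu b))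
    (hzero : Function.Surjective (res 0))
    -- surjectivity for the fundamental weights
    (hfund : ∀ i : I, Function.Surjective (res (Finsupp.single i 1))) :
    ∀ lam, Function.Surjective (res lam) :=
  stmt_16_general M N res mulM mulN hNsurj hcompat hzero hfund
end

section
/- Let G be a semisimple group and H a closed reductive subgroup such that (G,H) is a Donkin pair: every G-module with a good filtration restricts to an H-module with a good filtration, where good filtrations have subquotients that are direct sums of dual Weyl modules ∇^H(ν). Then for every dominant weight λ of T, the H-equivariant restriction map ∇(λ) → ∇^H(λ|_{T_H}) is surjective. -/
/-!
Let `Mᵢ` be the first step of the good filtration on which the restriction map does not vanish.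
On `Mᵢ` it kills `Mᵢ₋₁`, so it factors through `Mᵢ / Mᵢ₋₁ ≅ ∇^H(νᵢ)` as a nonzero map
`∇^H(νᵢ) → ∇^H(λ)`. Hence `λ ≤ νᵢ ≤ λ`, the factor is a nonzero endomorphism of `∇^H(λ)`,
thus surjective, and the restriction map is already surjective on `Mᵢ`.
-/

theorem Fin.exists_castSucc_and_not_succ {n : ℕ} {p : Fin (n + 1) → Prop}
    (h0 : p 0) (hlast : ¬p (Fin.last n)) : ∃ i : Fin n, p i.castSucc ∧ ¬p i.succ := by
  by_contra! h
  exact hlast (Fin.induction h0 h (Fin.last n))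

theorem LinearMap.exists_comp_eq_of_surjective_of_ker_le {R M N P : Type*} [Ring R]
    [AddCommGroup M] [Module R M] [AddCommGroup N] [Module R N] [AddCommGroup P] [Module R P]
    {φ : M →ₗ[R] N} (hφ : Function.Surjective φ) {g : M →ₗ[R] P} (h : ker φ ≤ ker g) :
    ∃ f : N →ₗ[R] P, f ∘ₗ φ = g := by
  let e := φ.quotKerEquivOfSurjective hφ
  refine ⟨(ker φ).liftQ g h ∘ₗ (e.symm : N →ₗ[R] M ⧸ ker φ), LinearMap.ext fun x => ?_⟩
  have he : e.symm (φ x) = Submodule.Quotient.mk x := e.symm_apply_eq.mpr rfl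
  simp [he]

theorem stmt_17_general {A : Type*} [Ring A] {Λ : Type*} [PartialOrder Λ]
    (DH : Λ → Type*) [∀ ν, AddCommGroup (DH ν)] [∀ ν, Module A (DH ν)]
    (lam : Λ) (M : Type*) [AddCommGroup M] [Module A M]
    (res : M →ₗ[A] DH lam) (hres : res ≠ 0)
    -- a good filtration of `M = res^G_H ∇(λ)`
    (n : ℕ) (Mfil : Fin (n + 1) → Submodule A M)
    (hbot : Mfil 0 = ⊥) (htop : Mfil (Fin.last n) = ⊤)
    (ν : Fin n → Λ) (hν : ∀ i, ν i ≤ lam)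
    (φ : ∀ i : Fin n, ↥(Mfil i.succ) →ₗ[A] DH (ν i))
    (hφsurj : ∀ i, Function.Surjective (φ i))
    (hφker : ∀ i, LinearMap.ker (φ i) =
      Submodule.comap (Mfil i.succ).subtype (Mfil i.castSucc))
    -- consequences of Frobenius reciprocity for dual Weyl modules
    (hhom : ∀ (ν₁ ν₂ : Λ) (f : DH ν₁ →ₗ[A] DH ν₂), f ≠ 0 → ν₂ ≤ ν₁)
    (hendo : ∀ (μ : Λ) (f : DH μ →ₗ[A] DH μ), f ≠ 0 → Function.Surjective f) :
    Function.Surjective res := by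
  obtain ⟨i, hbelow, hat⟩ := Fin.exists_castSucc_and_not_succ
    (p := fun j => Mfil j ≤ LinearMap.ker res) (by simp [hbot])
    (by simpa [htop, LinearMap.ker_eq_top] using hres)
  rw [LinearMap.le_ker_iff_comp_subtype_eq_zero] at hat
  obtain ⟨f, hf⟩ := LinearMap.exists_comp_eq_of_surjective_of_ker_le (hφsurj i)
    (g := res ∘ₗ (Mfil i.succ).subtype) fun x hx => hbelow (by rwa [hφker i] at hx)
  have hf0 : f ≠ 0 := by
    rintro rfl
    exact hat (by rw [← hf, LinearMap.zero_comp])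
  obtain rfl : ν i = lam := le_antisymm (hν i) (hhom _ _ f hf0)
  have hsurj : Function.Surjective (f ∘ₗ φ i) := (hendo _ f hf0).comp (hφsurj i)
  rw [hf, LinearMap.coe_comp] at hsurj
  exact hsurj.of_comp

/-- Lemma 5.3 (abstract form): `(G,H)` a Donkin pair implies the restriction map
`∇(λ) → ∇^H(λ|_{T_H})` is surjective.  Here `A` plays the role of the group
algebra of `H` (so `A`-modules are `H`-modules), `DH ν` are the dual Weyl
modules of `H` indexed by the poset `Λ` of weights, `M = res^G_H ∇(λ)` and
`res : M → DH λ'` is the (nonzero) restriction map.  The Donkin-pair hypothesis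
supplies a good filtration `0 = M₀ ⊂ ⋯ ⊂ Mₙ = M` with subquotients
`DH (ν i)`, `ν i ≤ λ'`; Frobenius reciprocity supplies the facts that a nonzero
map `DH ν₁ → DH ν₂` forces `ν₂ ≤ ν₁` and that nonzero endomorphisms of a dual
Weyl module are surjective. -/
theorem stmt_17 {A : Type*} [Ring A] {Λ : Type*} [PartialOrder Λ]
    (DH : Λ → Type*) [∀ ν, AddCommGroup (DH ν)] [∀ ν, Module A (DH ν)]
    (lam : Λ) (M : Type*) [AddCommGroup M] [Module A M]
    (res : M →ₗ[A] DH lam) (hres : res ≠ 0)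
    -- a good filtration of `M = res^G_H ∇(λ)`
    (n : ℕ) (Mfil : Fin (n + 1) → Submodule A M) (hmono : Monotone Mfil)
    (hbot : Mfil 0 = ⊥) (htop : Mfil (Fin.last n) = ⊤)
    (ν : Fin n → Λ) (hν : ∀ i, ν i ≤ lam)
    (φ : ∀ i : Fin n, ↥(Mfil i.succ) →ₗ[A] DH (ν i))
    (hφsurj : ∀ i, Function.Surjective (φ i))
    (hφker : ∀ i, LinearMap.ker (φ i) =
      Submodule.comap (Mfil i.succ).subtype (Mfil i.castSucc))
    -- consequences of Frobenius reciprocity for dual Weyl modules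
    (hhom : ∀ (ν₁ ν₂ : Λ) (f : DH ν₁ →ₗ[A] DH ν₂), f ≠ 0 → ν₂ ≤ ν₁)
    (hendo : ∀ (μ : Λ) (f : DH μ →ₗ[A] DH μ), f ≠ 0 → Function.Surjective f) :
    Function.Surjective res :=
  stmt_17_general DH lam M res hres n Mfil hbot htop ν hν φ hφsurj hφker hhom hendo
end
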